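/- arXiv:2306.12415 — 2 statements merged into one kernel-verified Lean document; each statement's English description precedes it below -/
import Mathlib

section
/- Let G and H be finite groups whose orders have the same prime factors, and let α : G →* MulAut H be an action by automorphisms. Let L₁ and L₂ be non-trivial orbits with |L₂| > |L₁|, such that gcd(|L₁|,|L₂|) = 1 and no non-trivial orbit L₃ satisfies both gcd(|L₃|,|L₁|) > 1 and gcd(|L₃|,|L₂|) > 1. Then the triple set product satisfies L₂·L₁⁻¹·L₁ = L₂. -/
/-!
When two orbits have coprime sizes, the diagonal action on their product is transitive, because
the stabilizer of a pair is the intersection of the two stabilizers, so its index is divisible by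
both orbit sizes. For an action by automorphisms this gives `O(x) O(y) = O(xy)`, an orbit at least
as large as each factor. With `c = b a⁻¹` we get `O(b) O(a)⁻¹ = O(c)` and `|O(c)| ≥ |O(b)| > 1`,
so `|O(c)|` is coprime to `|O(a)|` or to `|O(b)|`. In the first case
`O(b) O(a)⁻¹ O(a) = O(c) O(a) = O(ca) = O(b)`. In the second `O(a) = O(c⁻¹ b) = O(c⁻¹) O(b)`
would have at least `|O(b)| > |O(a)|` elements.
-/

open Pointwise MulAction

/-- The orbit of `a : H` under the action of `G` on `H` via `α`. -/
def orbitOf {G H : Type*} [Group G] [Group H] (α : G →* MulAut H) (a : H) : Set H :=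
  Set.range fun g : G => α g a

namespace MulAction

section Prod

variable {G α β : Type*} [Group G] [MulAction G α] [MulAction G β]

lemma orbit_prod_subset (x : α) (y : β) : orbit G (x, y) ⊆ orbit G x ×ˢ orbit G y := by
  rintro _ ⟨g, rfl⟩
  exact ⟨mem_orbit x g, mem_orbit y g⟩

lemma stabilizer_prod (x : α) (y : β) :
    stabilizer G (x, y) = stabilizer G x ⊓ stabilizer G y := by
  ext g
  simp [mem_stabilizer_iff, Prod.ext_iff]

lemma orbit_prod_eq_of_coprime [Finite α] [Finite β] {x : α} {y : β}
    (h : (orbit G x).ncard.Coprime (orbit G y).ncard) :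
    orbit G (x, y) = orbit G x ×ˢ orbit G y := by
  refine Set.eq_of_subset_of_ncard_le (orbit_prod_subset x y) ?_
  have hpos : 0 < (orbit G (x, y)).ncard := (Set.ncard_pos (Set.toFinite _)).mpr ⟨_, mem_orbit_self _⟩
  rw [Set.ncard_prod]
  refine Nat.le_of_dvd hpos (h.mul_dvd_of_dvd_of_dvd ?_ ?_) <;>
    rw [← index_stabilizer, ← index_stabilizer, stabilizer_prod]
  exacts [Subgroup.index_dvd_of_le inf_le_left, Subgroup.index_dvd_of_le inf_le_right]

end Prod

section MulDistrib

variable {G H : Type*} [Group G] [Group H] [MulDistribMulAction G H]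

lemma orbit_inv (x : H) : orbit G x⁻¹ = (orbit G x)⁻¹ := by
  ext z
  simp only [Set.mem_inv, mem_orbit_iff, smul_inv', inv_eq_iff_eq_inv]

lemma ncard_orbit_inv (x : H) : (orbit G x⁻¹).ncard = (orbit G x).ncard := by
  rw [orbit_inv, Set.ncard_inv]

variable [Finite H]

lemma orbit_mul_orbit_of_coprime {x y : H}
    (h : (orbit G x).ncard.Coprime (orbit G y).ncard) :
    orbit G x * orbit G y = orbit G (x * y) := by
  ext z
  constructor
  · rintro ⟨u, hu, v, hv, rfl⟩
    obtain ⟨g, hg⟩ : (u, v) ∈ orbit G (x, y) := orbit_prod_eq_of_coprime h ▸ ⟨hu, hv⟩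
    obtain ⟨hgu, hgv⟩ := Prod.ext_iff.mp hg
    exact ⟨g, (smul_mul' g x y).trans (congrArg₂ (· * ·) hgu hgv)⟩
  · rintro ⟨g, rfl⟩
    show g • (x * y) ∈ _
    rw [smul_mul']
    exact Set.mul_mem_mul (mem_orbit x g) (mem_orbit y g)

lemma max_ncard_orbit_le_ncard_orbit_mul {x y : H}
    (h : (orbit G x).ncard.Coprime (orbit G y).ncard) :
    max (orbit G x).ncard (orbit G y).ncard ≤ (orbit G (x * y)).ncard := by
  rw [← orbit_mul_orbit_of_coprime h]
  refine max_le ?_ ?_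
  · rw [← Set.ncard_smul_set (MulOpposite.op y)]
    exact Set.ncard_le_ncard (Set.op_smul_set_subset_mul (mem_orbit_self y))
  · rw [← Set.ncard_smul_set x]
    exact Set.ncard_le_ncard (Set.smul_set_subset_mul (mem_orbit_self x))

end MulDistrib

end MulAction

theorem stmt_2_general {G H : Type*} [Group G] [Group H] [Finite H]
    (α : G →* MulAut H)
    (a b : H)
    (hb : 1 < (orbitOf α b).ncard)
    (hlt : (orbitOf α a).ncard < (orbitOf α b).ncard)
    (hco : Nat.gcd (orbitOf α a).ncard (orbitOf α b).ncard = 1)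
    (hdist : ∀ c : H, 1 < (orbitOf α c).ncard →
      ¬(1 < Nat.gcd (orbitOf α c).ncard (orbitOf α a).ncard ∧
        1 < Nat.gcd (orbitOf α c).ncard (orbitOf α b).ncard)) :
    orbitOf α b * (orbitOf α a)⁻¹ * orbitOf α a = orbitOf α b := by
  let _ : MulDistribMulAction G H := MulDistribMulAction.compHom H α
  simp only [show ∀ x, orbitOf α x = orbit G x from fun _ => rfl] at *
  set c := b * a⁻¹
  have hba : (orbit G b).ncard.Coprime (orbit G a⁻¹).ncard := by
    rw [ncard_orbit_inv]; exact Nat.Coprime.symm hco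
  have hc : orbit G b * (orbit G a)⁻¹ = orbit G c := by
    rw [← orbit_inv]; exact orbit_mul_orbit_of_coprime hba
  have hbc : (orbit G b).ncard ≤ (orbit G c).ncard :=
    (le_max_left _ _).trans (max_ncard_orbit_le_ncard_orbit_mul hba)
  have hca_or_hcb : (orbit G c).ncard.Coprime (orbit G a).ncard ∨
      (orbit G c).ncard.Coprime (orbit G b).ncard := by
    have hc1 : 1 < (orbit G c).ncard := hb.trans_le hbc
    have := hdist c hc1
    have := Nat.gcd_pos_of_pos_left (orbit G a).ncard (Nat.zero_lt_of_lt hc1)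
    have := Nat.gcd_pos_of_pos_left (orbit G b).ncard (Nat.zero_lt_of_lt hc1)
    unfold Nat.Coprime
    omega
  rcases hca_or_hcb with hca | hcb
  · rw [hc, orbit_mul_orbit_of_coprime hca, inv_mul_cancel_right]
  · have hcb' : (orbit G c⁻¹).ncard.Coprime (orbit G b).ncard := by rwa [ncard_orbit_inv]
    have := (le_max_right _ _).trans (max_ncard_orbit_le_ncard_orbit_mul hcb')
    rw [show c⁻¹ * b = a by simp [c]] at this
    omega

theorem stmt_2 {G H : Type*} [Group G] [Group H] [Finite G] [Finite H]
    (α : G →* MulAut H)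
    (hpf : ∀ p : ℕ, p.Prime → (p ∣ Nat.card G ↔ p ∣ Nat.card H))
    (a b : H)
    (ha : 1 < (orbitOf α a).ncard) (hb : 1 < (orbitOf α b).ncard)
    (hlt : (orbitOf α a).ncard < (orbitOf α b).ncard)
    (hco : Nat.gcd (orbitOf α a).ncard (orbitOf α b).ncard = 1)
    (hdist : ∀ c : H, 1 < (orbitOf α c).ncard →
      ¬(1 < Nat.gcd (orbitOf α c).ncard (orbitOf α a).ncard ∧
        1 < Nat.gcd (orbitOf α c).ncard (orbitOf α b).ncard)) :
    orbitOf α b * (orbitOf α a)⁻¹ * orbitOf α a = orbitOf α b :=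
  stmt_2_general α a b hb hlt hco hdist
end

section
/- Let G and H be finite groups of the same order, and let α : G →* MulAut H be an action of G on H by automorphisms. Suppose the action has exactly one non-trivial orbit L (i.e. exactly one orbit with more than one element). Then the fixed-point subgroup H^G has index 2 in H, and |L| = |H|/2; in particular L = H \ H^G. -/
/-- The subgroup of fixed points `H^G` of the action of `G` on `H` via `α`. -/
def fixedSubgroup {G H : Type*} [Group G] [Group H] (α : G →* MulAut H) : Subgroup H where
  carrier := {h : H | ∀ g : G, α g h = h}
  one_mem' := fun g => map_one (α g)
  mul_mem' := fun {a b} ha hb g => by rw [map_mul, ha g, hb g]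
  inv_mem' := fun {a} ha g => by rw [map_inv, ha g]

/-!
The non-trivial orbits partition `H \ H^G`, so a unique one is all of it and has
`|H^G| (k - 1)` elements, where `k` is the index of `H^G`. By orbit–stabilizer it divides
`|G| = |H| = |H^G| k`, hence `k - 1 ∣ k`, which forces `k = 2`.
-/

namespace Subgroup

variable {G : Type*} [Group G] [Finite G] {F : Subgroup G}

theorem ncard_compl : ((F : Set G)ᶜ).ncard = Nat.card F * (F.index - 1) := by
  have hsum := Set.ncard_add_ncard_compl (F : Set G)
  rw [← Nat.card_coe_set_eq, SetLike.coe_sort_coe, ← card_mul_index F] at hsum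
  rw [Nat.mul_sub_one]
  omega

theorem index_eq_two_of_ncard_compl_dvd (hF : F ≠ ⊤)
    (hdvd : ((F : Set G)ᶜ).ncard ∣ Nat.card G) : F.index = 2 := by
  have hk : 2 ≤ F.index := one_lt_index_of_ne_top hF
  rw [ncard_compl, ← card_mul_index F] at hdvd
  have hsub : F.index - 1 ∣ F.index := (Nat.mul_dvd_mul_iff_left Nat.card_pos).1 hdvd
  have hone : F.index - 1 ∣ 1 := by
    simpa [Nat.sub_sub_self (by omega : 1 ≤ F.index)] using Nat.dvd_sub hsub dvd_rfl
  have hk1 : F.index - 1 = 1 := Nat.dvd_one.1 hone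
  omega

theorem ncard_compl_of_index_eq_two (h : F.index = 2) :
    ((F : Set G)ᶜ).ncard = Nat.card G / 2 := by
  rw [ncard_compl, ← card_mul_index F, h]
  omega

end Subgroup

section Orbits

variable {G H : Type*} [Group G] [Group H] (α : G →* MulAut H)

theorem mem_fixedSubgroup_iff {b : H} : b ∈ fixedSubgroup α ↔ ∀ g, α g b = b := Iff.rfl

theorem mem_orbitOf_self (b : H) : b ∈ orbitOf α b := ⟨1, by simp⟩

theorem orbitOf_eq_of_mem {b c : H} (h : c ∈ orbitOf α b) : orbitOf α c = orbitOf α b :=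
  letI := MulAction.compHom H α
  MulAction.orbit_eq_iff.2 h

theorem ncard_orbitOf_dvd [Finite G] (b : H) : (orbitOf α b).ncard ∣ Nat.card G := by
  let _ := MulAction.compHom H α
  exact MulAction.index_stabilizer G b ▸ Subgroup.index_dvd_card _

theorem one_lt_ncard_orbitOf_iff [Finite G] {b : H} :
    1 < (orbitOf α b).ncard ↔ b ∉ fixedSubgroup α := by
  rw [orbitOf, Set.one_lt_ncard_iff (Set.finite_range _), mem_fixedSubgroup_iff]
  constructor
  · rintro ⟨_, _, ⟨g, rfl⟩, ⟨g', rfl⟩, hne⟩ hb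
    exact hne ((hb g).trans (hb g').symm)
  · intro hb
    obtain ⟨g, hg⟩ := not_forall.1 hb
    exact ⟨_, _, ⟨g, rfl⟩, mem_orbitOf_self α b, hg⟩

theorem orbitOf_eq_compl_fixedSubgroup [Finite G] {a : H} (ha : a ∉ fixedSubgroup α)
    (huniq : ∀ b ∉ fixedSubgroup α, orbitOf α b = orbitOf α a) :
    orbitOf α a = (fixedSubgroup α : Set H)ᶜ := by
  ext x
  refine ⟨fun hx => ?_, fun hx => huniq x hx ▸ mem_orbitOf_self α x⟩
  rw [Set.mem_compl_iff, SetLike.mem_coe, ← one_lt_ncard_orbitOf_iff, orbitOf_eq_of_mem α hx]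
  exact (one_lt_ncard_orbitOf_iff α).2 ha

end Orbits

theorem stmt_14 {G H : Type*} [Group G] [Group H] [Finite G] [Finite H]
    (α : G →* MulAut H) (hcard : Nat.card G = Nat.card H)
    (L : Set H) (a : H) (hL : L = orbitOf α a) (hnt : 1 < L.ncard)
    (huniq : ∀ b : H, 1 < (orbitOf α b).ncard → orbitOf α b = L) :
    (fixedSubgroup α).index = 2 ∧ L.ncard = Nat.card H / 2 ∧
      L = ((fixedSubgroup α : Set H))ᶜ := by
  subst hL
  have ha : a ∉ fixedSubgroup α := (one_lt_ncard_orbitOf_iff α).1 hnt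
  have hcompl : orbitOf α a = (fixedSubgroup α : Set H)ᶜ :=
    orbitOf_eq_compl_fixedSubgroup α ha fun b hb => huniq b ((one_lt_ncard_orbitOf_iff α).2 hb)
  have hidx : (fixedSubgroup α).index = 2 :=
    Subgroup.index_eq_two_of_ncard_compl_dvd (fun h => ha (h ▸ Subgroup.mem_top a))
      (hcompl ▸ hcard ▸ ncard_orbitOf_dvd α a)
  exact ⟨hidx, hcompl ▸ Subgroup.ncard_compl_of_index_eq_two hidx, hcompl⟩
end
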